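/- Let φ be a C² function on ℝⁿ and α = Σⱼ αⱼ dxⱼ a smooth compactly supported 1-form on ℝⁿ. Define δ_φ α = -Σⱼ (∂αⱼ/∂xⱼ - (∂φ/∂xⱼ)αⱼ) and dα = Σ_{j<k}(∂α_k/∂x_j - ∂α_j/∂x_k) dx_j∧dx_k. Then ∫_{ℝⁿ} (Σ_{j,k} φ_{jk} αⱼ α_k + Σ_{j,k} |∂αⱼ/∂x_k|²) e^{-φ} dx = ∫_{ℝⁿ} (|δ_φ α|² + |dα|²) e^{-φ} dx, where |dα|² = (1/2)Σ_{j,k}|∂α_k/∂x_j - ∂α_j/∂x_k|² and φ_{jk} = ∂²φ/∂xⱼ∂x_k. -/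

import Mathlib

open MeasureTheory Real

/-- Partial derivative in the `i`-th coordinate direction. -/
noncomputable def pd {n : ℕ} {F : Type*} [NormedAddCommGroup F] [NormedSpace ℝ F]
    (i : Fin n) (f : (Fin n → ℝ) → F) (x : Fin n → ℝ) : F :=
  fderiv ℝ f x (Pi.single i 1)

variable {n : ℕ}

lemma pd_cont {f : (Fin n → ℝ) → ℝ} (hf : ContDiff ℝ 1 f) (i : Fin n) :
    Continuous (pd i f) :=
  (hf.continuous_fderiv (by norm_num)).clm_apply continuous_const

lemma pd_contDiff_one {f : (Fin n → ℝ) → ℝ} (hf : ContDiff ℝ 2 f) (i : Fin n) :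
    ContDiff ℝ 1 (pd i f) :=
  (hf.fderiv_right (m := 1) (by norm_num)).clm_apply contDiff_const

lemma pd_contDiff_top {f : (Fin n → ℝ) → ℝ} (hf : ContDiff ℝ (⊤ : ℕ∞) f) (i : Fin n) :
    ContDiff ℝ (⊤ : ℕ∞) (pd i f) :=
  (hf.fderiv_right (m := (⊤ : ℕ∞)) (by simp)).clm_apply contDiff_const

lemma pd_hcs {f : (Fin n → ℝ) → ℝ} (hf : HasCompactSupport f) (i : Fin n) :
    HasCompactSupport (pd i f) :=
  (hf.fderiv (𝕜 := ℝ)).comp_left (g := fun L : (Fin n → ℝ) →L[ℝ] ℝ => L (Pi.single i 1)) rfl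

lemma hcs_sub {f g : (Fin n → ℝ) → ℝ} (hf : HasCompactSupport f)
    (hg : HasCompactSupport g) : HasCompactSupport (fun x => f x - g x) :=
  hf.comp₂_left (m := fun a b : ℝ => a - b) hg (by simp)

lemma pd_sub {f g : (Fin n → ℝ) → ℝ} {x : Fin n → ℝ} (hf : DifferentiableAt ℝ f x)
    (hg : DifferentiableAt ℝ g x) (i : Fin n) :
    pd i (fun y => f y - g y) x = pd i f x - pd i g x := by
  unfold pd; rw [fderiv_fun_sub hf hg]; simp

lemma pd_mul {f g : (Fin n → ℝ) → ℝ} {x : Fin n → ℝ} (hf : DifferentiableAt ℝ f x)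
    (hg : DifferentiableAt ℝ g x) (i : Fin n) :
    pd i (fun y => f y * g y) x = pd i f x * g x + f x * pd i g x := by
  unfold pd; rw [fderiv_fun_mul hf hg]; simp; ring

lemma pd_comm {f : (Fin n → ℝ) → ℝ} (hf : ContDiff ℝ 2 f) (i j : Fin n) (x : Fin n → ℝ) :
    pd i (pd j f) x = pd j (pd i f) x := by
  have hd : DifferentiableAt ℝ (fderiv ℝ f) x :=
    (hf.fderiv_right (m := 1) (by norm_num)).differentiable (by norm_num) x
  have hsym := (hf.contDiffAt (x := x)).isSymmSndFDerivAt (by simp)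
  show fderiv ℝ (fun y => fderiv ℝ f y (Pi.single j 1)) x (Pi.single i 1)
      = fderiv ℝ (fun y => fderiv ℝ f y (Pi.single i 1)) x (Pi.single j 1)
  rw [fderiv_clm_apply hd (differentiableAt_const _), fderiv_clm_apply hd (differentiableAt_const _)]
  simp [hsym (Pi.single i 1) (Pi.single j 1)]

lemma ibp (φ : (Fin n → ℝ) → ℝ) (hφ : ContDiff ℝ 2 φ) {u v : (Fin n → ℝ) → ℝ}
    (hu : ContDiff ℝ 1 u) (huc : HasCompactSupport u)
    (hv : ContDiff ℝ 1 v) (i : Fin n) :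
    ∫ x, (pd i u x - pd i φ x * u x) * v x * exp (-φ x)
      = - ∫ x, u x * pd i v x * exp (-φ x) := by
  have hφ1 : ContDiff ℝ 1 φ := hφ.of_le (by norm_num)
  have hexp : ContDiff ℝ 1 (fun x => exp (-φ x)) := (hφ1.neg).exp
  set w : (Fin n → ℝ) → ℝ := fun x => u x * exp (-φ x) with hw_def
  have hw : ContDiff ℝ 1 w := hu.mul hexp
  have hwc : HasCompactSupport w := huc.mul_right
  have hkey : ∀ x, fderiv ℝ w x (Pi.single i 1)
      = (pd i u x - pd i φ x * u x) * exp (-φ x) := by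
    intro x
    have h1 : DifferentiableAt ℝ u x := (hu.differentiable (by norm_num)) x
    have h2 : DifferentiableAt ℝ (fun y => exp (-φ y)) x := (hexp.differentiable (by norm_num)) x
    have h3 : DifferentiableAt ℝ (fun y => -φ y) x := ((hφ1.differentiable (by norm_num)) x).neg
    rw [hw_def]
    rw [fderiv_fun_mul h1 h2]
    have h4 : fderiv ℝ (fun y => exp (-φ y)) x = exp (-φ x) • fderiv ℝ (fun y => -φ y) x :=
      fderiv_exp h3
    have h5 : fderiv ℝ (fun y => -φ y) x = -fderiv ℝ φ x := fderiv_neg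
    simp only [ContinuousLinearMap.add_apply, ContinuousLinearMap.smul_apply, h4, h5,
      ContinuousLinearMap.neg_apply, smul_eq_mul]
    show u x * (exp (-φ x) * -(pd i φ x)) + exp (-φ x) * pd i u x
        = (pd i u x - pd i φ x * u x) * exp (-φ x)
    ring
  have hcont_pdw : Continuous (fun x => fderiv ℝ w x (Pi.single i 1)) := pd_cont hw i
  have int1 : Integrable (fun x => fderiv ℝ w x (Pi.single i 1) * v x) :=
    (hcont_pdw.mul hv.continuous).integrable_of_hasCompactSupport ((pd_hcs hwc i).mul_right)
  have int2 : Integrable (fun x => w x * fderiv ℝ v x (Pi.single i 1)) :=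
    (hw.continuous.mul (pd_cont hv i)).integrable_of_hasCompactSupport (hwc.mul_right)
  have int3 : Integrable (fun x => w x * v x) :=
    (hw.continuous.mul hv.continuous).integrable_of_hasCompactSupport (hwc.mul_right)
  have H := integral_mul_fderiv_eq_neg_fderiv_mul_of_integrable int1 int2 int3
    (fun x _ => hw.differentiable (by norm_num) x) (fun x _ => hv.differentiable (by norm_num) x)
  calc ∫ x, (pd i u x - pd i φ x * u x) * v x * exp (-φ x)
      = ∫ x, fderiv ℝ w x (Pi.single i 1) * v x := by
        congr 1; funext x; rw [hkey x]; ring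
    _ = - ∫ x, w x * fderiv ℝ v x (Pi.single i 1) := by rw [H]; ring
    _ = - ∫ x, u x * pd i v x * exp (-φ x) := by
        congr 1; apply integral_congr_ae; filter_upwards with x
        show u x * exp (-φ x) * pd i v x = u x * pd i v x * exp (-φ x); ring

lemma key (φ : (Fin n → ℝ) → ℝ) (hφ : ContDiff ℝ 2 φ)
    (α : Fin n → (Fin n → ℝ) → ℝ)
    (hα : ∀ j, ContDiff ℝ (⊤ : ℕ∞) (α j)) (hαc : ∀ j, HasCompactSupport (α j)) (j k : Fin n) :
    ∫ x, (pd j (α j) x - pd j φ x * α j x) * (pd k (α k) x - pd k φ x * α k x) * exp (-φ x)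
      = ∫ x, (pd j (α k) x * pd k (α j) x + pd k (pd j φ) x * α j x * α k x) * exp (-φ x) := by
  have hφ1 : ContDiff ℝ 1 φ := hφ.of_le (by norm_num)
  have hα1 : ∀ m, ContDiff ℝ 1 (α m) := fun m => (hα m).of_le (by simp)
  have hα2 : ∀ m, ContDiff ℝ 2 (α m) := fun m => (hα m).of_le (WithTop.coe_le_coe.mpr le_top)
  have hpdφ1 : ∀ i, ContDiff ℝ 1 (pd i φ) := fun i => pd_contDiff_one hφ i
  have hpdα : ∀ i m, ContDiff ℝ (⊤ : ℕ∞) (pd i (α m)) := fun i m => pd_contDiff_top (hα m) i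
  have hpdα1 : ∀ i m, ContDiff ℝ 1 (pd i (α m)) := fun i m => (hpdα i m).of_le (by simp)
  have econt : Continuous (fun x => exp (-φ x)) := (Real.continuous_exp).comp (hφ1.continuous.neg)
  -- integrability of elementary pieces
  have iX : Integrable (fun x => α j x * pd k (pd j (α k)) x * exp (-φ x)) :=
    (((hα1 j).continuous.mul (pd_cont ((hpdα j k).of_le (by simp)) k)).mul econt).integrable_of_hasCompactSupport
      (((hαc j).mul_right).mul_right)
  have iC : Integrable (fun x => pd k (pd j φ) x * α j x * α k x * exp (-φ x)) :=
    ((((pd_cont (hpdφ1 j) k).mul (hα1 j).continuous).mul (hα1 k).continuous).mul econt).integrable_of_hasCompactSupport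
      ((((hαc j).mul_left).mul_right).mul_right)
  have iD : Integrable (fun x => pd k φ x * α j x * pd j (α k) x * exp (-φ x)) :=
    ((((hpdφ1 k).continuous.mul (hα1 j).continuous).mul (hpdα1 j k).continuous).mul econt).integrable_of_hasCompactSupport
      ((((hαc j).mul_left).mul_right).mul_right)
  have iE : Integrable (fun x => pd j (α k) x * pd k (α j) x * exp (-φ x)) :=
    (((hpdα1 j k).continuous.mul (hpdα1 k j).continuous).mul econt).integrable_of_hasCompactSupport
      (((pd_hcs (hαc j) k).mul_left).mul_right)
  -- first integration by parts
  have hv : ContDiff ℝ 1 (fun x => pd k (α k) x - pd k φ x * α k x) :=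
    (hpdα1 k k).sub ((hpdφ1 k).mul (hα1 k))
  have step1 : ∫ x, (pd j (α j) x - pd j φ x * α j x) * (pd k (α k) x - pd k φ x * α k x)
        * exp (-φ x)
      = - ∫ x, α j x * pd j (fun y => pd k (α k) y - pd k φ y * α k y) x * exp (-φ x) :=
    ibp φ hφ (hα1 j) (hαc j) hv j
  have hpdv : ∀ x, pd j (fun y => pd k (α k) y - pd k φ y * α k y) x
      = pd k (pd j (α k)) x - (pd k (pd j φ) x * α k x + pd k φ x * pd j (α k) x) := by
    intro x
    have d1 : DifferentiableAt ℝ (pd k (α k)) x := (hpdα1 k k).differentiable (by norm_num) x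
    have d3 : DifferentiableAt ℝ (pd k φ) x := (hpdφ1 k).differentiable (by norm_num) x
    have d4 : DifferentiableAt ℝ (α k) x := (hα1 k).differentiable (by norm_num) x
    have d2 : DifferentiableAt ℝ (fun y => pd k φ y * α k y) x := d3.mul d4
    rw [pd_sub d1 d2 j, pd_mul d3 d4 j, pd_comm (hα2 k) j k x, pd_comm hφ j k x]
  -- second integration by parts
  have step4 : ∫ x, (pd k (α j) x - pd k φ x * α j x) * pd j (α k) x * exp (-φ x)
      = - ∫ x, α j x * pd k (pd j (α k)) x * exp (-φ x) :=
    ibp φ hφ (hα1 j) (hαc j) (hpdα1 j k) k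
  have step4' : (∫ x, pd j (α k) x * pd k (α j) x * exp (-φ x))
        - ∫ x, pd k φ x * α j x * pd j (α k) x * exp (-φ x)
      = - ∫ x, α j x * pd k (pd j (α k)) x * exp (-φ x) := by
    rw [← integral_sub iE iD, ← step4]
    apply integral_congr_ae; filter_upwards with x; ring
  have step1' : ∫ x, (pd j (α j) x - pd j φ x * α j x) * (pd k (α k) x - pd k φ x * α k x)
        * exp (-φ x)
      = (∫ x, pd k (pd j φ) x * α j x * α k x * exp (-φ x))
        + (∫ x, pd k φ x * α j x * pd j (α k) x * exp (-φ x))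
        - ∫ x, α j x * pd k (pd j (α k)) x * exp (-φ x) := by
    have mid : ∫ x, (pd j (α j) x - pd j φ x * α j x) * (pd k (α k) x - pd k φ x * α k x)
          * exp (-φ x)
        = ∫ x, (pd k (pd j φ) x * α j x * α k x * exp (-φ x)
            + pd k φ x * α j x * pd j (α k) x * exp (-φ x))
            - α j x * pd k (pd j (α k)) x * exp (-φ x) := by
      rw [step1, ← integral_neg]
      apply integral_congr_ae; filter_upwards with x
      rw [hpdv x]; ring
    rw [mid, integral_sub ?_ iX, integral_add iC iD]
    exact iC.add iD
  have final : ∫ x, (pd j (α k) x * pd k (α j) x + pd k (pd j φ) x * α j x * α k x)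
        * exp (-φ x)
      = (∫ x, pd j (α k) x * pd k (α j) x * exp (-φ x))
        + ∫ x, pd k (pd j φ) x * α j x * α k x * exp (-φ x) := by
    rw [← integral_add iE iC]
    apply integral_congr_ae; filter_upwards with x; ring
  rw [step1', final]
  linarith [step4']

section main

variable (φ : (Fin n → ℝ) → ℝ) (α : Fin n → (Fin n → ℝ) → ℝ)

/-- auxiliary integral: Hessian term -/
noncomputable def J1 (j k : Fin n) : ℝ := ∫ x, pd k (pd j φ) x * α j x * α k x * exp (-φ x)
/-- auxiliary integral: square term -/
noncomputable def J2 (j k : Fin n) : ℝ := ∫ x, (pd k (α j) x) ^ 2 * exp (-φ x)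
/-- auxiliary integral: cross term -/
noncomputable def J3 (j k : Fin n) : ℝ := ∫ x, pd j (α k) x * pd k (α j) x * exp (-φ x)

end main


/-- Bochner type identity for weighted scalar 1-forms (Berndtsson). -/
theorem stmt2 {n : ℕ} (φ : (Fin n → ℝ) → ℝ) (hφ : ContDiff ℝ 2 φ)
    (α : Fin n → (Fin n → ℝ) → ℝ)
    (hα : ∀ j, ContDiff ℝ (⊤ : ℕ∞) (α j)) (hαc : ∀ j, HasCompactSupport (α j)) :
    ∫ x, (∑ j, ∑ k, pd k (pd j φ) x * α j x * α k x
        + ∑ j, ∑ k, (pd k (α j) x) ^ 2) * exp (-φ x)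
      = ∫ x, ((∑ j, (pd j (α j) x - pd j φ x * α j x)) ^ 2
        + (1 / 2) * ∑ j, ∑ k, (pd j (α k) x - pd k (α j) x) ^ 2) * exp (-φ x) := by
  have hφ1 : ContDiff ℝ 1 φ := hφ.of_le (by norm_num)
  have hα1 : ∀ m, ContDiff ℝ 1 (α m) := fun m => (hα m).of_le (by simp)
  have hpdφ1 : ∀ i, ContDiff ℝ 1 (pd i φ) := fun i => pd_contDiff_one hφ i
  have hpdα1 : ∀ i m, ContDiff ℝ 1 (pd i (α m)) :=
    fun i m => (pd_contDiff_top (hα m) i).of_le (by simp)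
  have econt : Continuous (fun x => exp (-φ x)) := Real.continuous_exp.comp hφ1.continuous.neg
  -- integrability of all the elementary pieces
  have iJ1 : ∀ j k : Fin n,
      Integrable (fun x => pd k (pd j φ) x * α j x * α k x * exp (-φ x)) :=
    fun j k =>
      ((((pd_cont (hpdφ1 j) k).mul (hα1 j).continuous).mul (hα1 k).continuous).mul
        econt).integrable_of_hasCompactSupport ((((hαc j).mul_left).mul_right).mul_right)
  have iJ2 : ∀ j k : Fin n, Integrable (fun x => (pd k (α j) x) ^ 2 * exp (-φ x)) :=
    fun j k =>
      (((hpdα1 k j).continuous.pow 2).mul econt).integrable_of_hasCompactSupport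
        (((pd_hcs (hαc j) k).comp_left (g := fun t : ℝ => t ^ 2) (by norm_num)).mul_right :)
  have iJ3 : ∀ j k : Fin n,
      Integrable (fun x => pd j (α k) x * pd k (α j) x * exp (-φ x)) :=
    fun j k =>
      (((hpdα1 j k).continuous.mul (hpdα1 k j).continuous).mul
        econt).integrable_of_hasCompactSupport (((pd_hcs (hαc j) k).mul_left).mul_right)
  have iDD : ∀ j k : Fin n,
      Integrable (fun x => (pd j (α j) x - pd j φ x * α j x)
        * (pd k (α k) x - pd k φ x * α k x) * exp (-φ x)) :=
    fun j k =>
      ((((hpdα1 j j).continuous.sub ((hpdφ1 j).continuous.mul (hα1 j).continuous)).mul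
        ((hpdα1 k k).continuous.sub ((hpdφ1 k).continuous.mul (hα1 k).continuous))).mul
        econt).integrable_of_hasCompactSupport
        (((hcs_sub (pd_hcs (hαc k) k) ((hαc k).mul_left)).mul_left).mul_right)
  have iC2 : ∀ j k : Fin n,
      Integrable (fun x => (pd j (α k) x - pd k (α j) x) ^ 2 * exp (-φ x)) :=
    fun j k =>
      ((((hpdα1 j k).continuous.sub (hpdα1 k j).continuous).pow 2).mul
        econt).integrable_of_hasCompactSupport
        (((hcs_sub (pd_hcs (hαc k) j) (pd_hcs (hαc j) k)).comp_left (g := fun t : ℝ => t ^ 2)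
          (by norm_num)).mul_right :)
  -- left-hand side
  have L : (∫ x, (∑ j, ∑ k, pd k (pd j φ) x * α j x * α k x
        + ∑ j, ∑ k, (pd k (α j) x) ^ 2) * exp (-φ x))
      = ∑ p : Fin n × Fin n, (J1 φ α p.1 p.2 + J2 φ α p.1 p.2) := by
    calc (∫ x, (∑ j, ∑ k, pd k (pd j φ) x * α j x * α k x
            + ∑ j, ∑ k, (pd k (α j) x) ^ 2) * exp (-φ x))
        = ∫ x, ∑ p : Fin n × Fin n, (pd p.2 (pd p.1 φ) x * α p.1 x * α p.2 x * exp (-φ x)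
            + (pd p.2 (α p.1) x) ^ 2 * exp (-φ x)) := by
          congr 1; funext x
          rw [Fintype.sum_prod_type]
          simp only [add_mul, Finset.sum_mul, ← Finset.sum_add_distrib]
      _ = ∑ p : Fin n × Fin n, ∫ x, (pd p.2 (pd p.1 φ) x * α p.1 x * α p.2 x * exp (-φ x)
            + (pd p.2 (α p.1) x) ^ 2 * exp (-φ x)) :=
          integral_finset_sum _ (fun p _ => (iJ1 p.1 p.2).add (iJ2 p.1 p.2))
      _ = ∑ p : Fin n × Fin n, (J1 φ α p.1 p.2 + J2 φ α p.1 p.2) :=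
          Finset.sum_congr rfl (fun p _ => integral_add (iJ1 p.1 p.2) (iJ2 p.1 p.2))
  -- right-hand side
  have R : (∫ x, ((∑ j, (pd j (α j) x - pd j φ x * α j x)) ^ 2
        + (1 / 2) * ∑ j, ∑ k, (pd j (α k) x - pd k (α j) x) ^ 2) * exp (-φ x))
      = (∑ p : Fin n × Fin n, (J3 φ α p.1 p.2 + J1 φ α p.1 p.2))
        + ∑ p : Fin n × Fin n, ((1 / 2) * J2 φ α p.2 p.1 + (1 / 2) * J2 φ α p.1 p.2
            - J3 φ α p.1 p.2) := by
    have split : (∫ x, ((∑ j, (pd j (α j) x - pd j φ x * α j x)) ^ 2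
          + (1 / 2) * ∑ j, ∑ k, (pd j (α k) x - pd k (α j) x) ^ 2) * exp (-φ x))
        = (∫ x, ∑ p : Fin n × Fin n, (pd p.1 (α p.1) x - pd p.1 φ x * α p.1 x)
            * (pd p.2 (α p.2) x - pd p.2 φ x * α p.2 x) * exp (-φ x))
          + ∫ x, ∑ p : Fin n × Fin n,
            (1 / 2) * ((pd p.1 (α p.2) x - pd p.2 (α p.1) x) ^ 2 * exp (-φ x)) := by
      rw [← integral_add (integrable_finset_sum _ (fun p _ => iDD p.1 p.2))
        (integrable_finset_sum _ (fun p _ => (iC2 p.1 p.2).const_mul (1 / 2)))]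
      congr 1; funext x
      rw [Fintype.sum_prod_type, Fintype.sum_prod_type, add_mul]
      congr 1
      · rw [sq, Finset.sum_mul_sum]
        simp only [Finset.sum_mul]
      · simp only [Finset.mul_sum, Finset.sum_mul, mul_assoc]
    have S1 : (∫ x, ∑ p : Fin n × Fin n, (pd p.1 (α p.1) x - pd p.1 φ x * α p.1 x)
          * (pd p.2 (α p.2) x - pd p.2 φ x * α p.2 x) * exp (-φ x))
        = ∑ p : Fin n × Fin n, (J3 φ α p.1 p.2 + J1 φ α p.1 p.2) := by
      rw [integral_finset_sum _ (fun p _ => iDD p.1 p.2)]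
      refine Finset.sum_congr rfl (fun p _ => ?_)
      rw [key φ hφ α hα hαc p.1 p.2]
      rw [show (J3 φ α p.1 p.2 + J1 φ α p.1 p.2)
        = (∫ x, pd p.1 (α p.2) x * pd p.2 (α p.1) x * exp (-φ x))
          + ∫ x, pd p.2 (pd p.1 φ) x * α p.1 x * α p.2 x * exp (-φ x) from rfl]
      rw [← integral_add (iJ3 p.1 p.2) (iJ1 p.1 p.2)]
      apply integral_congr_ae; filter_upwards with x; ring
    have S2 : (∫ x, ∑ p : Fin n × Fin n,
          (1 / 2) * ((pd p.1 (α p.2) x - pd p.2 (α p.1) x) ^ 2 * exp (-φ x)))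
        = ∑ p : Fin n × Fin n, ((1 / 2) * J2 φ α p.2 p.1 + (1 / 2) * J2 φ α p.1 p.2
            - J3 φ α p.1 p.2) := by
      rw [integral_finset_sum _ (fun p _ => (iC2 p.1 p.2).const_mul (1 / 2))]
      refine Finset.sum_congr rfl (fun p _ => ?_)
      have expand : (∫ x, (1 / 2) * ((pd p.1 (α p.2) x - pd p.2 (α p.1) x) ^ 2 * exp (-φ x)))
          = ∫ x, ((1 / 2) * ((pd p.1 (α p.2) x) ^ 2 * exp (-φ x))
              + (1 / 2) * ((pd p.2 (α p.1) x) ^ 2 * exp (-φ x)))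
              - pd p.1 (α p.2) x * pd p.2 (α p.1) x * exp (-φ x) := by
        apply integral_congr_ae; filter_upwards with x; ring
      rw [expand, integral_sub ?_ (iJ3 p.1 p.2), integral_add ((iJ2 p.2 p.1).const_mul (1 / 2))
        ((iJ2 p.1 p.2).const_mul (1 / 2)), integral_const_mul, integral_const_mul]
      · rfl
      · exact ((iJ2 p.2 p.1).const_mul (1 / 2)).add ((iJ2 p.1 p.2).const_mul (1 / 2))
    rw [split, S1, S2]
  rw [L, R]
  have swapeq : (∑ p : Fin n × Fin n, J2 φ α p.2 p.1) = ∑ p : Fin n × Fin n, J2 φ α p.1 p.2 :=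
    Fintype.sum_equiv (Equiv.prodComm (Fin n) (Fin n)) _ _ (fun p => rfl)
  simp only [Finset.sum_add_distrib, Finset.sum_sub_distrib, ← Finset.mul_sum] at *
  rw [swapeq]
  ring
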